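/- Let G be a finite group, N a normal subgroup, and χ an irreducible character of G with N ≤ ker χ. Suppose χ = αβ where α and β are irreducible characters of G with coprime determinantal orders in the sense that α(g)/α(1) always has π-number order on Z(α) and β(g)/β(1) always has π'-number order on Z(β). Then N ≤ ker α and N ≤ ker β, so that α and β both factor through G/N. -/

import Mathlib

/-!
For `n ∈ N` we have `α(n) β(n) = α(1) β(1)`, while `|α(n)| ≤ α(1)` and `|β(n)| ≤ β(1)` because
character values are sums of roots of unity. Hence both bounds are equalities, i.e. `n` lies in
`Z(α)` and in `Z(β)`, and `ζ = α(n)/α(1)` is a unit whose inverse is `β(n)/β(1)`. The order of `ζ`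
is then both a `π`-number and a `π'`-number, so `ζ = 1`.
-/

open CategoryTheory MonoidalCategory FDRep

theorem eq_one_of_prime_dvd_orderOf_mem_of_notMem {M : Type*} [Monoid M] {x : M} (π : Set ℕ)
    (h : ∀ p : ℕ, p.Prime → p ∣ orderOf x → p ∈ π)
    (h' : ∀ p : ℕ, p.Prime → p ∣ orderOf x → p ∉ π) : x = 1 := by
  by_contra hx
  have hp := Nat.minFac_prime (mt orderOf_eq_one_iff.1 hx)
  exact h' _ hp (Nat.minFac_dvd _) (h _ hp (Nat.minFac_dvd _))

namespace Module.End

variable {V : Type*} [AddCommGroup V] [Module ℂ V]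

theorem norm_eq_one_of_hasEigenvalue_of_pow_eq_one {f : End ℂ V} {n : ℕ} (hn : n ≠ 0)
    (hf : f ^ n = 1) {μ : ℂ} (hμ : f.HasEigenvalue μ) : ‖μ‖ = 1 := by
  obtain ⟨v, hv⟩ := hμ.exists_hasEigenvector
  have hμn : μ ^ n • v = (1 : ℂ) • v := by rw [← hv.pow_apply, hf, one_smul, one_apply]
  exact Complex.norm_eq_one_of_pow_eq_one (smul_left_injective ℂ hv.2 hμn) hn

theorem norm_trace_le_finrank_of_pow_eq_one [FiniteDimensional ℂ V] {f : End ℂ V} {n : ℕ}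
    (hn : n ≠ 0) (hf : f ^ n = 1) : ‖LinearMap.trace ℂ V f‖ ≤ finrank ℂ V := by
  rw [trace_eq_sum_roots_charpoly_of_splits (IsAlgClosed.splits f.charpoly)]
  calc ‖f.charpoly.roots.sum‖ ≤ (f.charpoly.roots.map (‖·‖)).sum := norm_multiset_sum_le _
    _ = (f.charpoly.roots.map fun _ => (1 : ℝ)).sum := by
        refine congrArg _ (Multiset.map_congr rfl fun μ hμ => ?_)
        refine norm_eq_one_of_hasEigenvalue_of_pow_eq_one hn hf ?_
        exact (hasEigenvalue_iff_isRoot_charpoly f μ).2 (Polynomial.isRoot_of_mem_roots hμ)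
    _ ≤ finrank ℂ V := by
        simpa [Multiset.map_const'] using f.charpoly.card_roots'.trans_eq f.charpoly_natDegree

end Module.End

namespace FDRep

theorem finrank_pos {k G : Type} [Field k] [Group G] (V : FDRep k G) [Simple V] :
    0 < Module.finrank k V := by
  refine Nat.pos_of_ne_zero fun h => id_nonzero V ?_
  have : Subsingleton V := Module.finrank_zero_iff.mp h
  ext v
  exact Subsingleton.elim _ _

variable {G : Type} [Group G] (V W : FDRep ℂ G)

theorem norm_character_le_finrank [Finite G] (g : G) :
    ‖V.character g‖ ≤ Module.finrank ℂ V :=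
  Module.End.norm_trace_le_finrank_of_pow_eq_one Nat.card_pos.ne'
    (by rw [← map_pow, pow_card_eq_one', map_one])

theorem norm_character_eq_finrank_of_mul_eq [Finite G] [Simple W] {g : G}
    (h : V.character g * W.character g = V.character 1 * W.character 1) :
    ‖V.character g‖ = Module.finrank ℂ V := by
  have hV := norm_character_le_finrank V g
  have hW := norm_character_le_finrank W g
  have hW0 : (0 : ℝ) < Module.finrank ℂ W := by exact_mod_cast finrank_pos W
  have hnorm : ‖V.character g‖ * ‖W.character g‖ =
      Module.finrank ℂ V * Module.finrank ℂ W := by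
    rw [← norm_mul, h, char_one, char_one, norm_mul, Complex.norm_natCast,
      Complex.norm_natCast]
  refine le_antisymm hV (le_of_not_gt fun hlt => ?_)
  linarith [mul_lt_mul_of_pos_right hlt hW0,
    mul_le_mul_of_nonneg_left hW (norm_nonneg (V.character g))]

theorem character_eq_character_one_of_mul_eq [Simple V] [Simple W] (π : Set ℕ) {g : G}
    (h : V.character g * W.character g = V.character 1 * W.character 1)
    (hα : ∀ ζ : ℂˣ, (ζ : ℂ) = V.character g / V.character 1 →
      ∀ p : ℕ, p.Prime → p ∣ orderOf ζ → p ∈ π)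
    (hβ : ∀ ζ : ℂˣ, (ζ : ℂ) = W.character g / W.character 1 →
      ∀ p : ℕ, p.Prime → p ∣ orderOf ζ → p ∉ π) :
    V.character g = V.character 1 ∧ W.character g = W.character 1 := by
  have hV1 : V.character 1 ≠ 0 := by simp [char_one, (finrank_pos V).ne']
  have hW1 : W.character 1 ≠ 0 := by simp [char_one, (finrank_pos W).ne']
  have h1 : V.character 1 * W.character 1 ≠ 0 := mul_ne_zero hV1 hW1
  let ζ : ℂˣ :=
    ⟨V.character g / V.character 1, W.character g / W.character 1,
      by rw [div_mul_div_comm, h, div_self h1],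
      by rw [mul_comm, div_mul_div_comm, h, div_self h1]⟩
  have hζ : ζ = 1 := eq_one_of_prime_dvd_orderOf_mem_of_notMem π (hα ζ rfl)
    fun p hp hdvd => hβ ζ⁻¹ rfl p hp (by rwa [orderOf_inv])
  exact ⟨(div_eq_one_iff_eq hV1).1 (congrArg Units.val hζ),
    (div_eq_one_iff_eq hW1).1 (congrArg (fun u : ℂˣ => ((u⁻¹ : ℂˣ) : ℂ)) hζ)⟩

end FDRep

theorem stmt7_general (G : Type) [Group G] [Fintype G] (π : Set ℕ)
    (N : Subgroup G) (V W : FDRep ℂ G)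
    (hV : Simple V) (hW : Simple W)
    (hker : ∀ n ∈ N, (V ⊗ W).character n = (V ⊗ W).character 1)
    (hα : ∀ g : G, ‖V.character g‖ = (Module.finrank ℂ V : ℝ) →
      ∀ ζ : ℂˣ, (ζ : ℂ) = V.character g / V.character 1 →
        ∀ p : ℕ, p.Prime → p ∣ orderOf ζ → p ∈ π)
    (hβ : ∀ g : G, ‖W.character g‖ = (Module.finrank ℂ W : ℝ) →
      ∀ ζ : ℂˣ, (ζ : ℂ) = W.character g / W.character 1 →
        ∀ p : ℕ, p.Prime → p ∣ orderOf ζ → p ∉ π) :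
    (∀ n ∈ N, V.character n = V.character 1) ∧
      (∀ n ∈ N, W.character n = W.character 1) := by
  have key : ∀ n ∈ N, V.character n = V.character 1 ∧ W.character n = W.character 1 := by
    intro n hn
    have h : V.character n * W.character n = V.character 1 * W.character 1 := by
      simpa only [char_tensor, Pi.mul_apply] using hker n hn
    have h' : W.character n * V.character n = W.character 1 * V.character 1 := by
      rw [mul_comm, h, mul_comm]
    exact character_eq_character_one_of_mul_eq V W π h
      (hα n (norm_character_eq_finrank_of_mul_eq V W h))
      (hβ n (norm_character_eq_finrank_of_mul_eq W V h'))
  exact ⟨fun n hn => (key n hn).1, fun n hn => (key n hn).2⟩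

/-- If N ⊴ G, χ = αβ irreducible with N ≤ ker χ, where α, β are irreducible with
central values of π-number (resp. π'-number) order, then N ≤ ker α and N ≤ ker β,
so both α and β factor through G/N. -/
theorem stmt7 (G : Type) [Group G] [Fintype G] (π : Set ℕ)
    (N : Subgroup G) (hN : N.Normal) (V W : FDRep ℂ G)
    (hV : Simple V) (hW : Simple W) (hirr : Simple (V ⊗ W))
    (hker : ∀ n ∈ N, (V ⊗ W).character n = (V ⊗ W).character 1)
    (hα : ∀ g : G, ‖V.character g‖ = (Module.finrank ℂ V : ℝ) →
      ∀ ζ : ℂˣ, (ζ : ℂ) = V.character g / V.character 1 →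
        ∀ p : ℕ, p.Prime → p ∣ orderOf ζ → p ∈ π)
    (hβ : ∀ g : G, ‖W.character g‖ = (Module.finrank ℂ W : ℝ) →
      ∀ ζ : ℂˣ, (ζ : ℂ) = W.character g / W.character 1 →
        ∀ p : ℕ, p.Prime → p ∣ orderOf ζ → p ∉ π) :
    (∀ n ∈ N, V.character n = V.character 1) ∧
      (∀ n ∈ N, W.character n = W.character 1) :=
  stmt7_general G π N V W hV hW hker hα hβ
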